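/- arXiv:1812.09190 — 4 statements merged into one kernel-verified Lean document; each statement's English description precedes it below -/
import Mathlib

section
/- Let L be a complete lattice with base S, and let ◁ be the induced basic cover (a ◁ U iff a ≤ ⋁U). Then the map sending the class [U] ∈ P(S)/=◁ to ⋁U ∈ L is a well-defined order isomorphism between the quotient suplattice P(S)/=◁ and L. -/
/-! Since `a ◁ V` means `a ≤ ⋁V`, the relation `U ◁ V` (all of `U` covered by `V`) is exactly
`⋁U ≤ ⋁V`, so `=◁` is equality of joins; surjectivity is the base property. -/

theorem sSup_eq_sSup_iff_forall_le_sSup {L : Type*} [CompleteLattice L] {U V : Set L} :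
    ((∀ u ∈ U, u ≤ sSup V) ∧ (∀ v ∈ V, v ≤ sSup U)) ↔ sSup U = sSup V := by
  rw [← sSup_le_iff, ← sSup_le_iff, le_antisymm_iff]

/-- For a complete lattice `L` with base `S` and the induced basic cover `a ◁ U ↔ a ≤ ⋁U`,
the map `[U] ↦ ⋁U` is a well-defined order isomorphism from `P(S)/=◁` onto `L`:
`U =◁ V` iff `⋁U = ⋁V` (well-definedness and injectivity), the induced order corresponds to
the order of `L`, and every `p ∈ L` is `⋁U` for some `U ⊆ S` (surjectivity). -/
theorem quotient_iso_base {L : Type*} [CompleteLattice L] (S : Set L)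
    (hbase : ∀ p : L, p = sSup {a ∈ S | a ≤ p}) :
    (∀ U V : Set L, U ⊆ S → V ⊆ S →
      (((∀ u ∈ U, u ≤ sSup V) ∧ (∀ v ∈ V, v ≤ sSup U)) ↔ sSup U = sSup V)) ∧
    (∀ U V : Set L, U ⊆ S → V ⊆ S → ((∀ u ∈ U, u ≤ sSup V) ↔ sSup U ≤ sSup V)) ∧
    (∀ p : L, ∃ U, U ⊆ S ∧ sSup U = p) :=
  ⟨fun _ _ _ _ => sSup_eq_sSup_iff_forall_le_sSup,
    fun _ _ _ _ => sSup_le_iff.symm,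
    fun p => ⟨{a ∈ S | a ≤ p}, Set.sep_subset S _, (hbase p).symm⟩⟩
end

section
/- Let (S, ◁, ⋉) be a basic topology and let V ⊆ S. Set Z = {a ∈ S | a ⋉ V}. Then the map φ_Z : P(S)/=◁ → Prop sending [U] to the proposition 'U and Z have a common element' is well-defined (independent of the representative U) and preserves arbitrary joins. -/
/-! Well-definedness is the compatibility axiom (3) of a basic topology: a point of `U` that
is positive on `V` is covered by `U'`, so it yields a point of `U'` positive on `V`.
Join preservation holds because an existential over a union splits over its members. -/

theorem exists_mem_iUnion_iff {α ι : Type*} {s : ι → Set α} {p : α → Prop} :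
    (∃ x ∈ ⋃ i, s i, p x) ↔ ∃ i, ∃ x ∈ s i, p x := by
  simp only [Set.mem_iUnion, ← exists_and_right]
  exact exists_comm

theorem exists_pos_of_forall_cov {S : Type*} {cov pos : S → Set S → Prop}
    (pos3 : ∀ (a : S) (U V : Set S), cov a U → pos a V → ∃ b ∈ U, pos b V)
    {U U' V : Set S} (hUU' : ∀ u ∈ U, cov u U') :
    (∃ x ∈ U, pos x V) → ∃ x ∈ U', pos x V :=
  fun ⟨x, hx, hpos⟩ => pos3 x U' V (hUU' x hx) hpos

theorem positivity_overlap_suplattice_hom_general {S : Type} (cov pos : S → Set S → Prop)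
    (pos3 : ∀ (a : S) (U V : Set S), cov a U → pos a V → ∃ b ∈ U, pos b V)
    (V : Set S) :
    (∀ U U' : Set S, (∀ u ∈ U, cov u U') → (∀ u ∈ U', cov u U) →
      ((∃ x ∈ U, pos x V) ↔ ∃ x ∈ U', pos x V)) ∧
    (∀ (ι : Type) (U : ι → Set S),
      ((∃ x ∈ ⋃ i, U i, pos x V) ↔ ∃ i, ∃ x ∈ U i, pos x V)) :=
  ⟨fun _ _ hUU' hU'U => ⟨exists_pos_of_forall_cov pos3 hUU', exists_pos_of_forall_cov pos3 hU'U⟩,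
    fun _ _ => exists_mem_iUnion_iff⟩

/-- For a basic topology `(S, ◁, ⋉)` and `V ⊆ S`, with `Z = {a | a ⋉ V}`, the map
`φ_Z : P(S)/=◁ → Prop`, `[U] ↦ (U ≬ Z)`, is well-defined and preserves arbitrary joins. -/
theorem positivity_overlap_suplattice_hom {S : Type} (cov pos : S → Set S → Prop)
    (covrefl : ∀ (a : S) (U : Set S), a ∈ U → cov a U)
    (covtrans : ∀ (a : S) (U V : Set S), cov a U → (∀ u ∈ U, cov u V) → cov a V)
    (pos1 : ∀ (a : S) (U : Set S), pos a U → a ∈ U)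
    (pos2 : ∀ (a : S) (U V : Set S), pos a U → (∀ b, pos b U → b ∈ V) → pos a V)
    (pos3 : ∀ (a : S) (U V : Set S), cov a U → pos a V → ∃ b ∈ U, pos b V)
    (V : Set S) :
    (∀ U U' : Set S, (∀ u ∈ U, cov u U') → (∀ u ∈ U', cov u U) →
      ((∃ x ∈ U, pos x V) ↔ ∃ x ∈ U', pos x V)) ∧
    (∀ (ι : Type) (U : ι → Set S),
      ((∃ x ∈ ⋃ i, U i, pos x V) ↔ ∃ i, ∃ x ∈ U i, pos x V)) :=
  positivity_overlap_suplattice_hom_general cov pos pos3 V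
end

section
/- Let C : Cᵒᵖ ⥤ Preord be a pseudofunctor-style doctrine given concretely as follows: objects of the total category are pairs (L, Φ) with L a complete lattice and Φ a sub-suplattice of the join-preserving maps L → Prop; morphisms (L, Φ) → (M, Ψ) are join-preserving maps f : M → L with {φ ∘ f | φ ∈ Φ} ⊆ Ψ. Then the binary product of (L₁, Φ₁) and (L₂, Φ₂) in this category exists and is given by (L₁ × L₂, Φ), where L₁ × L₂ has the product order and Φ = {φ : L₁ × L₂ → Prop join-preserving | φ ∘ π₁' ∈ Φ₁-condition and φ ∘ π₂' ∈ Φ₂-condition}, i.e., Φ = P(π₁)(Φ₁) ∩ P(π₂)(Φ₂) where P(πᵢ)(Φᵢ) = {φ | φ ∘ πᵢ ∈ Φᵢ} for the coprojections πᵢ : Lᵢ → L₁ × L₂ in SLᵒᵖ. -/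
/-!
The product lattice `L₁ × L₂` is the coproduct of `L₁` and `L₂` in `SL`: a pair of
join-preserving maps `g₁ : L₁ → M`, `g₂ : L₂ → M` extends along `x ↦ (x, ⊥)` and `y ↦ (⊥, y)`
to the join-preserving map `(x, y) ↦ g₁ x ⊔ g₂ y`, and to no other one, because
`(x, y) = (x, ⊥) ⊔ (⊥, y)`. The predicate part of the product is then forced: pulling a
predicate `ψ` of `M` back along this map and restricting to `Lᵢ` gives back `ψ ∘ gᵢ`.
-/

section SSupPreserving

variable {α β γ : Type*} [CompleteLattice γ]

theorem sSup_image_mk_bot [CompleteLattice α] [CompleteLattice β] (A : Set α) :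
    (sSup A, (⊥ : β)) = sSup ((fun x => (x, (⊥ : β))) '' A) := by
  refine Prod.ext ?_ (le_antisymm bot_le ?_)
  · simp only [Prod.fst_sSup, Set.image_image, Set.image_id']
  · simp only [Prod.snd_sSup, Set.image_image]
    exact sSup_le (by rintro _ ⟨_, _, rfl⟩; exact le_rfl)

theorem sSup_image_bot_mk [CompleteLattice α] [CompleteLattice β] (A : Set β) :
    ((⊥ : α), sSup A) = sSup ((fun y => ((⊥ : α), y)) '' A) := by
  refine Prod.ext (le_antisymm bot_le ?_) ?_
  · simp only [Prod.fst_sSup, Set.image_image]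
    exact sSup_le (by rintro _ ⟨_, _, rfl⟩; exact le_rfl)
  · simp only [Prod.snd_sSup, Set.image_image, Set.image_id']

theorem map_bot_of_map_sSup [CompleteLattice α] {f : α → γ}
    (hf : ∀ A : Set α, f (sSup A) = sSup (f '' A)) : f ⊥ = ⊥ := by
  simpa using hf ∅

theorem map_sup_of_map_sSup [CompleteLattice α] {f : α → γ}
    (hf : ∀ A : Set α, f (sSup A) = sSup (f '' A)) (a b : α) : f (a ⊔ b) = f a ⊔ f b := by
  rw [← sSup_pair, hf, Set.image_pair, sSup_pair]

def supCopair (g₁ : α → γ) (g₂ : β → γ) (p : α × β) : γ :=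
  g₁ p.1 ⊔ g₂ p.2

theorem supCopair_map_sSup [CompleteLattice α] [CompleteLattice β] {g₁ : α → γ} {g₂ : β → γ}
    (hg₁ : ∀ A : Set α, g₁ (sSup A) = sSup (g₁ '' A))
    (hg₂ : ∀ A : Set β, g₂ (sSup A) = sSup (g₂ '' A)) (A : Set (α × β)) :
    supCopair g₁ g₂ (sSup A) = sSup (supCopair g₁ g₂ '' A) := by
  calc supCopair g₁ g₂ (sSup A)
      = (⨆ p : A, g₁ p.1.1) ⊔ ⨆ p : A, g₂ p.1.2 := by
        rw [supCopair, Prod.fst_sSup, Prod.snd_sSup, hg₁, hg₂, Set.image_image,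
          Set.image_image, sSup_image', sSup_image']
    _ = sSup (supCopair g₁ g₂ '' A) := by rw [sSup_image', ← iSup_sup_eq]; rfl

theorem supCopair_mk_bot [CompleteLattice β] {g₁ : α → γ} {g₂ : β → γ}
    (hg₂ : ∀ A : Set β, g₂ (sSup A) = sSup (g₂ '' A)) (x : α) :
    supCopair g₁ g₂ (x, ⊥) = g₁ x := by
  simp only [supCopair, map_bot_of_map_sSup hg₂, sup_bot_eq]

theorem supCopair_bot_mk [CompleteLattice α] {g₁ : α → γ} {g₂ : β → γ}
    (hg₁ : ∀ A : Set α, g₁ (sSup A) = sSup (g₁ '' A)) (y : β) :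
    supCopair g₁ g₂ (⊥, y) = g₂ y := by
  simp only [supCopair, map_bot_of_map_sSup hg₁, bot_sup_eq]

theorem eq_supCopair_of_map_sSup [CompleteLattice α] [CompleteLattice β] {h : α × β → γ}
    (hh : ∀ A : Set (α × β), h (sSup A) = sSup (h '' A)) :
    h = supCopair (fun x => h (x, ⊥)) (fun y => h (⊥, y)) := by
  funext p
  rw [supCopair, ← map_sup_of_map_sSup hh]
  simp

theorem pred_comp_map_sSup_iff [CompleteLattice α] {h : α → γ} {ψ : γ → Prop}
    (hh : ∀ A : Set α, h (sSup A) = sSup (h '' A))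
    (hψ : ∀ A : Set γ, ψ (sSup A) ↔ ∃ c ∈ A, ψ c) (A : Set α) :
    ψ (h (sSup A)) ↔ ∃ a ∈ A, ψ (h a) := by
  rw [hh, hψ, Set.exists_mem_image]

end SSupPreserving

theorem btop_binary_product_general {L₁ L₂ : Type} [CompleteLattice L₁] [CompleteLattice L₂]
    (Φ₁ : Set (L₁ → Prop)) (Φ₂ : Set (L₂ → Prop)) :
    let π₁ : L₁ → L₁ × L₂ := fun x => (x, ⊥)
    let π₂ : L₂ → L₁ × L₂ := fun y => (⊥, y)
    let Φ : Set (L₁ × L₂ → Prop) :=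
      {φ | (∀ A : Set (L₁ × L₂), φ (sSup A) ↔ ∃ a ∈ A, φ a) ∧
           (fun x => φ (π₁ x)) ∈ Φ₁ ∧ (fun y => φ (π₂ y)) ∈ Φ₂}
    -- the projections are morphisms `(L₁ × L₂, Φ) → (Lᵢ, Φᵢ)` of `BTop`
    (∀ A : Set L₁, π₁ (sSup A) = sSup (π₁ '' A)) ∧
    (∀ A : Set L₂, π₂ (sSup A) = sSup (π₂ '' A)) ∧
    (∀ φ ∈ Φ, (fun x => φ (π₁ x)) ∈ Φ₁) ∧
    (∀ φ ∈ Φ, (fun y => φ (π₂ y)) ∈ Φ₂) ∧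
    -- universal property of the product
    (∀ (M : Type) (_ : CompleteLattice M) (Ψ : Set (M → Prop)),
      (∀ ψ ∈ Ψ, ∀ A : Set M, ψ (sSup A) ↔ ∃ a ∈ A, ψ a) →
      (∀ (ι : Type) (g : ι → M → Prop), (∀ i, g i ∈ Ψ) → (fun x => ∃ i, g i x) ∈ Ψ) →
      ∀ (g₁ : L₁ → M) (g₂ : L₂ → M),
        (∀ A : Set L₁, g₁ (sSup A) = sSup (g₁ '' A)) →
        (∀ A : Set L₂, g₂ (sSup A) = sSup (g₂ '' A)) →
        (∀ ψ ∈ Ψ, (fun x => ψ (g₁ x)) ∈ Φ₁) →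
        (∀ ψ ∈ Ψ, (fun y => ψ (g₂ y)) ∈ Φ₂) →
        ∃! h : L₁ × L₂ → M,
          (∀ A : Set (L₁ × L₂), h (sSup A) = sSup (h '' A)) ∧
          (∀ ψ ∈ Ψ, (fun a => ψ (h a)) ∈ Φ) ∧
          (∀ x, h (π₁ x) = g₁ x) ∧ (∀ y, h (π₂ y) = g₂ y)) := by
  intro π₁ π₂ Φ
  refine ⟨sSup_image_mk_bot, sSup_image_bot_mk, fun φ hφ => hφ.2.1, fun φ hφ => hφ.2.2, ?_⟩
  intro M _ Ψ hΨ _ g₁ g₂ hg₁ hg₂ hm₁ hm₂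
  have hπ₁ := supCopair_mk_bot (g₁ := g₁) hg₂
  have hπ₂ := supCopair_bot_mk (g₂ := g₂) hg₁
  refine ⟨supCopair g₁ g₂, ⟨supCopair_map_sSup hg₁ hg₂, fun ψ hψ => ⟨?_, ?_, ?_⟩, hπ₁, hπ₂⟩, ?_⟩
  · exact pred_comp_map_sSup_iff (supCopair_map_sSup hg₁ hg₂) (hΨ ψ hψ)
  · simpa only [π₁, hπ₁] using hm₁ ψ hψ
  · simpa only [π₂, hπ₂] using hm₂ ψ hψ
  · rintro h ⟨hs, -, h₁, h₂⟩
    rw [eq_supCopair_of_map_sSup hs]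
    exact congrArg₂ supCopair (funext h₁) (funext h₂)

/-- Binary products in `BTop` (the Grothendieck construction of the doctrine sending a
suplattice `L` to the sub-suplattices of `SL(L, Prop)`): the product of `(L₁, Φ₁)` and
`(L₂, Φ₂)` is `(L₁ × L₂, P(π₁)(Φ₁) ∩ P(π₂)(Φ₂))`, where `π₁ x = (x, ⊥)`, `π₂ y = (⊥, y)`
are the coprojections of `L₁ × L₂` in `SL`, together with these projections, and it
satisfies the expected universal property. -/
theorem btop_binary_product {L₁ L₂ : Type} [CompleteLattice L₁] [CompleteLattice L₂]
    (Φ₁ : Set (L₁ → Prop)) (Φ₂ : Set (L₂ → Prop))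
    (h₁ : ∀ φ ∈ Φ₁, ∀ A : Set L₁, φ (sSup A) ↔ ∃ a ∈ A, φ a)
    (h₂ : ∀ φ ∈ Φ₂, ∀ A : Set L₂, φ (sSup A) ↔ ∃ a ∈ A, φ a)
    (hc₁ : ∀ (ι : Type) (g : ι → L₁ → Prop), (∀ i, g i ∈ Φ₁) → (fun x => ∃ i, g i x) ∈ Φ₁)
    (hc₂ : ∀ (ι : Type) (g : ι → L₂ → Prop), (∀ i, g i ∈ Φ₂) → (fun x => ∃ i, g i x) ∈ Φ₂) :
    let π₁ : L₁ → L₁ × L₂ := fun x => (x, ⊥)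
    let π₂ : L₂ → L₁ × L₂ := fun y => (⊥, y)
    let Φ : Set (L₁ × L₂ → Prop) :=
      {φ | (∀ A : Set (L₁ × L₂), φ (sSup A) ↔ ∃ a ∈ A, φ a) ∧
           (fun x => φ (π₁ x)) ∈ Φ₁ ∧ (fun y => φ (π₂ y)) ∈ Φ₂}
    -- the projections are morphisms `(L₁ × L₂, Φ) → (Lᵢ, Φᵢ)` of `BTop`
    (∀ A : Set L₁, π₁ (sSup A) = sSup (π₁ '' A)) ∧
    (∀ A : Set L₂, π₂ (sSup A) = sSup (π₂ '' A)) ∧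
    (∀ φ ∈ Φ, (fun x => φ (π₁ x)) ∈ Φ₁) ∧
    (∀ φ ∈ Φ, (fun y => φ (π₂ y)) ∈ Φ₂) ∧
    -- universal property of the product
    (∀ (M : Type) (_ : CompleteLattice M) (Ψ : Set (M → Prop)),
      (∀ ψ ∈ Ψ, ∀ A : Set M, ψ (sSup A) ↔ ∃ a ∈ A, ψ a) →
      (∀ (ι : Type) (g : ι → M → Prop), (∀ i, g i ∈ Ψ) → (fun x => ∃ i, g i x) ∈ Ψ) →
      ∀ (g₁ : L₁ → M) (g₂ : L₂ → M),
        (∀ A : Set L₁, g₁ (sSup A) = sSup (g₁ '' A)) →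
        (∀ A : Set L₂, g₂ (sSup A) = sSup (g₂ '' A)) →
        (∀ ψ ∈ Ψ, (fun x => ψ (g₁ x)) ∈ Φ₁) →
        (∀ ψ ∈ Ψ, (fun y => ψ (g₂ y)) ∈ Φ₂) →
        ∃! h : L₁ × L₂ → M,
          (∀ A : Set (L₁ × L₂), h (sSup A) = sSup (h '' A)) ∧
          (∀ ψ ∈ Ψ, (fun a => ψ (h a)) ∈ Φ) ∧
          (∀ x, h (π₁ x) = g₁ x) ∧ (∀ y, h (π₂ y) = g₂ y)) :=
  btop_binary_product_general Φ₁ Φ₂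
end

section
/- Let X be a topological space and (L, Φ) a positive topology, i.e., L is a frame and Φ a sub-suplattice of join-preserving maps L → Prop. There is a bijection, natural in both arguments, between: (a) frame homomorphisms f : L → Opens(X) such that φ_C ∘ f ∈ Φ for every closed C ⊆ X (where φ_C(I) = 'C meets I'), and (b) continuous maps g : X → Pt⁺(L, Φ), where Pt⁺(L, Φ) = {p : L → Prop | p a frame homomorphism and p ∈ Φ} carries the topology whose opens are the sets {p | p(y) = True} for y ∈ L. The bijection sends f to x ↦ φ_{cl{x}} ∘ f, and g to y ↦ g⁻¹({p | p(y)}). -/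
open TopologicalSpace

/-- A frame homomorphism into `Prop`. -/
def IsFrameHomToProp {L : Type} [Order.Frame L] (p : L → Prop) : Prop :=
  p ⊤ ∧ (∀ a b : L, p (a ⊓ b) ↔ p a ∧ p b) ∧ (∀ A : Set L, p (sSup A) ↔ ∃ a ∈ A, p a)

/-- The points of the positive topology `(L, Φ)`: frame homomorphisms `L → Prop`
belonging to `Φ`. -/
def PtPlus (L : Type) [Order.Frame L] (Φ : Set (L → Prop)) : Type :=
  {p : L → Prop // IsFrameHomToProp p ∧ p ∈ Φ}

/-- `Pt⁺(L, Φ)` is topologized by the opens `{p | p y}`, `y ∈ L`. -/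
instance instTopPtPlus (L : Type) [Order.Frame L] (Φ : Set (L → Prop)) :
    TopologicalSpace (PtPlus L Φ) :=
  TopologicalSpace.generateFrom {S | ∃ y : L, S = {p : PtPlus L Φ | p.val y}}

/-! Evaluating a frame homomorphism `f : L → Opens X` at a point `x` gives a point
`y ↦ x ∈ f y` of `L`, and since `cl{x}` meets an open set exactly when `x` lies in it, this
is `φ_{cl{x}} ∘ f`, which lies in `Φ`. Conversely a continuous `g : X → Pt⁺(L, Φ)` pulls
the basic opens back to a frame homomorphism, and `φ_C ∘ g⁻¹` is the pointwise union of
the points `g x`, `x ∈ C`, so it lies in `Φ` because `Φ` is closed under unions. The two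
constructions are then mutually inverse on the nose. -/

theorem exists_mem_closure_singleton_and_mem_iff {X : Type*} [TopologicalSpace X] {U : Set X}
    (hU : IsOpen U) (x : X) : (∃ z, z ∈ closure {x} ∧ z ∈ U) ↔ x ∈ U :=
  ⟨fun ⟨_, hz, hzU⟩ => (specializes_iff_mem_closure.2 hz).mem_open hU hzU,
    fun hx => ⟨x, subset_closure rfl, hx⟩⟩

section

variable {X : Type} [TopologicalSpace X] {L : Type} [Order.Frame L] {Φ : Set (L → Prop)}

def IsFrameHomToOpens (f : L → Opens X) : Prop :=
  f ⊤ = ⊤ ∧ (∀ a b : L, f (a ⊓ b) = f a ⊓ f b) ∧ (∀ A : Set L, f (sSup A) = ⨆ a ∈ A, f a)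

theorem IsFrameHomToOpens.isFrameHomToProp_mem {f : L → Opens X} (hf : IsFrameHomToOpens f)
    (x : X) : IsFrameHomToProp (fun y => x ∈ f y) := by
  obtain ⟨htop, hinf, hsSup⟩ := hf
  exact ⟨by simp [htop], fun a b => by simp [hinf], fun A => by simp [hsSup]⟩

def pointOfFrameHom {f : L → Opens X} (hf : IsFrameHomToOpens f)
    (hΦ : ∀ C : Set X, IsClosed C → (fun y => ∃ x, x ∈ C ∧ x ∈ f y) ∈ Φ) (x : X) :
    PtPlus L Φ :=
  ⟨fun y => x ∈ f y, hf.isFrameHomToProp_mem x, by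
    convert hΦ (closure {x}) isClosed_closure using 1
    ext y
    exact (exists_mem_closure_singleton_and_mem_iff (f y).isOpen x).symm⟩

theorem continuous_pointOfFrameHom {f : L → Opens X} (hf : IsFrameHomToOpens f)
    (hΦ : ∀ C : Set X, IsClosed C → (fun y => ∃ x, x ∈ C ∧ x ∈ f y) ∈ Φ) :
    Continuous (pointOfFrameHom hf hΦ) := by
  refine continuous_generateFrom_iff.2 ?_
  rintro _ ⟨y, rfl⟩
  exact (f y).isOpen

theorem PtPlus.isOpen_setOf_val (y : L) : IsOpen {p : PtPlus L Φ | p.val y} :=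
  GenerateOpen.basic _ ⟨y, rfl⟩

def preimageOpens {g : X → PtPlus L Φ} (hg : Continuous g) (y : L) : Opens X :=
  ⟨g ⁻¹' {p | p.val y}, (PtPlus.isOpen_setOf_val y).preimage hg⟩

theorem isFrameHomToOpens_preimageOpens {g : X → PtPlus L Φ} (hg : Continuous g) :
    IsFrameHomToOpens (preimageOpens hg) := by
  refine ⟨?_, fun a b => ?_, fun A => ?_⟩ <;> ext x
  · simpa [preimageOpens] using (g x).2.1.1
  · simpa [preimageOpens] using (g x).2.1.2.1 a b
  · simpa [preimageOpens, Opens.mem_iSup] using (g x).2.1.2.2 A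

omit [TopologicalSpace X] in
theorem PtPlus.exists_mem_val_mem
    (hclosed : ∀ (ι : Type) (g : ι → L → Prop), (∀ i, g i ∈ Φ) → (fun y => ∃ i, g i y) ∈ Φ)
    (g : X → PtPlus L Φ) (C : Set X) : (fun y => ∃ x, x ∈ C ∧ (g x).val y) ∈ Φ := by
  simpa only [Subtype.exists, exists_prop] using hclosed C (fun x => (g x).val) (fun x => (g x).2.2)

end

theorem lambda_ptPlus_adjunction_general {X : Type} [TopologicalSpace X] (L : Type) [Order.Frame L]
    (Φ : Set (L → Prop))
    (hclosed : ∀ (ι : Type) (g : ι → L → Prop), (∀ i, g i ∈ Φ) →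
      (fun x => ∃ i, g i x) ∈ Φ) :
    ∃ e : {f : L → Opens X //
            (f ⊤ = ⊤) ∧ (∀ a b : L, f (a ⊓ b) = f a ⊓ f b) ∧
            (∀ A : Set L, f (sSup A) = ⨆ a ∈ A, f a) ∧
            ∀ C : Set X, IsClosed C → (fun y => ∃ x, x ∈ C ∧ x ∈ f y) ∈ Φ} ≃
          {g : X → PtPlus L Φ // Continuous g},
      (∀ f x y, ((e f).val x).val y ↔ ∃ z, z ∈ closure {x} ∧ z ∈ (f.val y : Set X)) ∧
      (∀ g y, ((e.symm g).val y : Set X) = g.val ⁻¹' {p : PtPlus L Φ | p.val y}) :=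
  ⟨{ toFun := fun f =>
        have hf : IsFrameHomToOpens f.1 := ⟨f.2.1, f.2.2.1, f.2.2.2.1⟩
        ⟨pointOfFrameHom hf f.2.2.2.2, continuous_pointOfFrameHom hf f.2.2.2.2⟩
     invFun := fun g =>
        have hf := isFrameHomToOpens_preimageOpens g.2
        ⟨preimageOpens g.2, hf.1, hf.2.1, hf.2.2,
          fun C _ => PtPlus.exists_mem_val_mem hclosed g.1 C⟩
     left_inv := fun _ => rfl
     right_inv := fun _ => rfl },
    fun f x y => (exists_mem_closure_singleton_and_mem_iff (f.val y).isOpen x).symm,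
    fun _ _ => rfl⟩

/-- The hom-bijection of the adjunction `Λ ⊣ Pt⁺` between `Top` and `PTop`: morphisms
`Λ(X) → (L, Φ)` (frame homomorphisms `f : L → Opens X` with `φ_C ∘ f ∈ Φ` for all closed
`C`) correspond to continuous maps `X → Pt⁺(L, Φ)`, via `f ↦ (x ↦ φ_{cl{x}} ∘ f)` and
`g ↦ (y ↦ g⁻¹ {p | p y})`. -/
theorem lambda_ptPlus_adjunction {X : Type} [TopologicalSpace X] (L : Type) [Order.Frame L]
    (Φ : Set (L → Prop))
    (hpres : ∀ φ ∈ Φ, ∀ A : Set L, φ (sSup A) ↔ ∃ a ∈ A, φ a)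
    (hclosed : ∀ (ι : Type) (g : ι → L → Prop), (∀ i, g i ∈ Φ) →
      (fun x => ∃ i, g i x) ∈ Φ) :
    ∃ e : {f : L → Opens X //
            (f ⊤ = ⊤) ∧ (∀ a b : L, f (a ⊓ b) = f a ⊓ f b) ∧
            (∀ A : Set L, f (sSup A) = ⨆ a ∈ A, f a) ∧
            ∀ C : Set X, IsClosed C → (fun y => ∃ x, x ∈ C ∧ x ∈ f y) ∈ Φ} ≃
          {g : X → PtPlus L Φ // Continuous g},
      (∀ f x y, ((e f).val x).val y ↔ ∃ z, z ∈ closure {x} ∧ z ∈ (f.val y : Set X)) ∧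
      (∀ g y, ((e.symm g).val y : Set X) = g.val ⁻¹' {p : PtPlus L Φ | p.val y}) :=
  lambda_ptPlus_adjunction_general L Φ hclosed
end
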